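/- arXiv:1005.0128 — 2 statements merged into one kernel-verified Lean document; each statement's English description precedes it below -/
import Mathlib

section
/- For a rational subspace s̲ of dimension k, the intersection I_{s̲} ∩ I_{k-1} equals the sum of the ideals I_{t̲} over all rational subspaces t̲ ⊊ s̲ of dimension k-1, where I_{t̲} = (d_{X∖t̲}) and I_{k-1} = Σ_{t̲ rational, dim t̲ = k-1} I_{t̲}. -/
/-!
STATEMENT 4: For a rational subspace s̲ of dimension k (k ≥ 1), the
intersection I_{s̲} ∩ I_{k-1} equals the sum of the ideals I_{t̲} over all
rational subspaces t̲ ⊊ s̲ of dimension k-1; here I_{t̲} = (d_{X∖t̲}) and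
I_{k-1} = Σ_{t̲ rational, dim t̲ = k-1} I_{t̲}.
-/

noncomputable section

open scoped BigOperators

def linP {n : ℕ} (a : Fin n → ℝ) : MvPolynomial (Fin n) ℝ :=
  ∑ i, MvPolynomial.C (a i) * MvPolynomial.X i

def RationalSub {n m : ℕ} (X : Fin m → Fin n → ℝ)
    (W : Submodule ℝ (Fin n → ℝ)) : Prop :=
  W = Submodule.span ℝ (Set.range X ∩ ↑W)

open Classical in
/-- The principal ideal I_{W} = (d_{X∖W}) generated by the product of the
(linear forms of the) elements of X not lying in W. -/
def Isub {n m : ℕ} (X : Fin m → Fin n → ℝ) (W : Submodule ℝ (Fin n → ℝ)) :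
    Ideal (MvPolynomial (Fin n) ℝ) :=
  Ideal.span {∏ i ∈ Finset.univ.filter (fun i => X i ∉ W), linP (X i)}

/-- I_j = Σ over rational subspaces of dimension j of I_{t̲}. -/
def Ilev {n m : ℕ} (X : Fin m → Fin n → ℝ) (j : ℕ) :
    Ideal (MvPolynomial (Fin n) ℝ) :=
  ⨆ W ∈ {W : Submodule ℝ (Fin n → ℝ) | RationalSub X W ∧ Module.finrank ℝ W = j},
    Isub X W


/-!
Write `d_W` for the generator of `I_W`. For `t < s` one has `d_t = d_{s,t} · d_s`, where `d_{s,t}`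
is the product of the `x ∈ X ∩ s` outside `t`; so the right-hand side is `d_s · J`, with `J`
generated by the `d_{s,t}` for the rational hyperplanes `t` of `s`. Every generator `d_t` of
`I_{k-1}` is divisible by some `d_{s,t'}` (extend a basis of `span (X ∩ s ∩ t)` by vectors of
`X ∩ s` to a basis of `s` and drop one new vector), so `I_{k-1} ⊆ J`.

It remains to cancel `d_s` from `d_s · c ∈ J`, one linear factor `a ∉ s` at a time. Take a
functional `φ` vanishing on `s` with `φ a = 1`. The directional derivative `∂_φ` kills the
generators of `J`, hence preserves `J`, and `∂_φ a = 1`, so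
`∂^{k+1} (a c) = a ∂^{k+1} c + (k+1) ∂^k c`. As `∂^N c = 0` for large `N`, descending induction
gives `∂^k c ∈ J` for all `k`, in particular `c ∈ J`.
-/

section Derivation

variable {R A : Type*} [CommSemiring R] [CommSemiring A] [Algebra R A]

theorem Derivation.iterate_succ_mul_of_map_map_eq_zero (D : Derivation R A A) {x : A}
    (hx : D (D x) = 0) (c : A) (k : ℕ) :
    D^[k + 1] (x * c) = x * D^[k + 1] c + (k + 1) • (D x * D^[k] c) := by
  have hsucc (m : ℕ) (y : A) : D (D^[m] y) = D^[m + 1] y :=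
    (Function.iterate_succ_apply' D m y).symm
  induction k with
  | zero => simp [D.leibniz, smul_eq_mul, mul_comm]
  | succ k ih =>
    rw [Function.iterate_succ_apply', ih]
    simp only [map_add, map_nsmul, D.leibniz, hx, hsucc, smul_eq_mul, mul_zero, add_zero,
      succ_nsmul]
    ring

theorem Derivation.map_mem_span_of_map_eq_zero (D : Derivation R A A) {G : Set A}
    (hG : ∀ g ∈ G, D g = 0) {x : A} (hx : x ∈ Ideal.span G) : D x ∈ Ideal.span G := by
  induction hx using Submodule.span_induction with
  | mem g hg => rw [hG g hg]; exact zero_mem _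
  | zero => rw [map_zero]; exact zero_mem _
  | add y z _ _ hy hz => rw [map_add]; exact add_mem hy hz
  | smul a y hy ih =>
    rw [smul_eq_mul, D.leibniz, smul_eq_mul, smul_eq_mul]
    exact add_mem (Ideal.mul_mem_left _ _ ih) (Ideal.mul_mem_right _ _ hy)

end Derivation

theorem Derivation.mem_of_mul_mem_of_map_eq_one {K A : Type*} [Field K] [CharZero K]
    [CommRing A] [Algebra K A] (D : Derivation K A A) {J : Ideal A}
    (hJ : ∀ x ∈ J, D x ∈ J) {l c : A} (hl : D l = 1) {N : ℕ} (hN : D^[N] c = 0)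
    (h : l * c ∈ J) : c ∈ J := by
  have hDl : D (D l) = 0 := by rw [hl, D.map_one_eq_zero]
  have hJ' (m : ℕ) {x : A} (hx : x ∈ J) : D^[m] x ∈ J := by
    induction m with
    | zero => exact hx
    | succ m ih => rw [Function.iterate_succ_apply']; exact hJ _ ih
  have step (k : ℕ) (hk : D^[k + 1] c ∈ J) : D^[k] c ∈ J := by
    have h1 := hJ' (k + 1) h
    rw [D.iterate_succ_mul_of_map_map_eq_zero hDl, hl, one_mul,
      J.add_mem_iff_right (J.mul_mem_left l hk), ← Nat.cast_smul_eq_nsmul K] at h1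
    have h2 := J.smul_of_tower_mem ((k + 1 : ℕ) : K)⁻¹ h1
    rwa [inv_smul_smul₀ (Nat.cast_ne_zero.2 k.succ_ne_zero)] at h2
  exact Nat.decreasingInduction (motive := fun k _ => D^[k] c ∈ J) (fun k _ => step k)
    (by rw [hN]; exact J.zero_mem) (Nat.zero_le N)

theorem MvPolynomial.exists_iterate_derivation_eq_zero {R σ : Type*} [CommSemiring R]
    (D : Derivation R (MvPolynomial σ R) (MvPolynomial σ R))
    (hD : ∀ i, D (D (MvPolynomial.X i)) = 0) (p : MvPolynomial σ R) : ∃ N, D^[N] p = 0 := by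
  induction p using MvPolynomial.induction_on with
  | C a => exact ⟨1, by simp [← MvPolynomial.algebraMap_eq]⟩
  | add p q hp hq =>
    obtain ⟨M, hM⟩ := hp
    obtain ⟨N, hN⟩ := hq
    refine ⟨M + N, ?_⟩
    have hp' : D^[M + N] p = 0 := by
      rw [add_comm, Function.iterate_add_apply, hM, iterate_map_zero]
    have hq' : D^[M + N] q = 0 := by rw [Function.iterate_add_apply, hN, iterate_map_zero]
    rw [iterate_map_add, hp', hq', add_zero]
  | mul_X p i hp =>
    obtain ⟨N, hN⟩ := hp
    refine ⟨N + 1, ?_⟩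
    rw [mul_comm, D.iterate_succ_mul_of_map_map_eq_zero (hD i), Function.iterate_succ_apply', hN]
    simp

section LinearForms

open MvPolynomial

variable {n : ℕ}

def dualDerivation (f : Module.Dual ℝ (Fin n → ℝ)) :
    Derivation ℝ (MvPolynomial (Fin n) ℝ) (MvPolynomial (Fin n) ℝ) :=
  mkDerivation ℝ fun i => C (f (Pi.single i 1))

theorem dualDerivation_linP (f : Module.Dual ℝ (Fin n → ℝ)) (a : Fin n → ℝ) :
    dualDerivation f (linP a) = C (f a) := by
  conv_rhs => rw [pi_eq_sum_univ' a]
  simp [linP, dualDerivation, Derivation.leibniz, map_sum, smul_eq_mul]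

theorem linP_mul_mem_span_cancel {s : Submodule ℝ (Fin n → ℝ)}
    {G : Set (MvPolynomial (Fin n) ℝ)} (hG : G ⊆ Algebra.adjoin ℝ (linP '' (s : Set (Fin n → ℝ))))
    {a : Fin n → ℝ} (ha : a ∉ s) {c : MvPolynomial (Fin n) ℝ}
    (h : linP a * c ∈ Ideal.span G) : c ∈ Ideal.span G := by
  obtain ⟨f, hfa, hfs⟩ := s.exists_dual_map_eq_bot_of_notMem ha inferInstance
  set D := dualDerivation ((f a)⁻¹ • f)
  have hDs : ∀ p ∈ Algebra.adjoin ℝ (linP '' s), D p = 0 := by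
    refine fun p hp => D.eqOn_adjoin (D2 := 0) ?_ hp
    rintro - ⟨b, hb, rfl⟩
    have hfb : f b = 0 := by simpa [hfs] using Submodule.mem_map_of_mem (f := f) hb
    simp [D, dualDerivation_linP, hfb]
  obtain ⟨N, hN⟩ := exists_iterate_derivation_eq_zero D (fun i => by simp [D, dualDerivation]) c
  exact D.mem_of_mul_mem_of_map_eq_one
    (fun x hx => D.map_mem_span_of_map_eq_zero (fun g hg => hDs g (hG hg)) hx)
    (by simp [D, dualDerivation_linP, hfa]) hN h

theorem prod_linP_mul_mem_span_cancel {s : Submodule ℝ (Fin n → ℝ)}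
    {G : Set (MvPolynomial (Fin n) ℝ)} (hG : G ⊆ Algebra.adjoin ℝ (linP '' (s : Set (Fin n → ℝ))))
    {ι : Type*} (F : Finset ι) (v : ι → Fin n → ℝ) (hv : ∀ i ∈ F, v i ∉ s)
    {c : MvPolynomial (Fin n) ℝ} (h : (∏ i ∈ F, linP (v i)) * c ∈ Ideal.span G) :
    c ∈ Ideal.span G := by
  classical
  induction F using Finset.induction_on with
  | empty => simpa using h
  | insert i F hi ih =>
    rw [Finset.prod_insert hi, mul_assoc] at h
    exact ih (fun j hj => hv j (Finset.mem_insert_of_mem hj))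
      (linP_mul_mem_span_cancel hG (hv i (Finset.mem_insert_self i F)) h)

end LinearForms

section Arrangement

variable {n m : ℕ} (X : Fin m → Fin n → ℝ)

theorem rationalSub_span {A : Set (Fin n → ℝ)} (hA : A ⊆ Set.range X) :
    RationalSub X (Submodule.span ℝ A) :=
  le_antisymm (Submodule.span_mono fun _ ha => ⟨hA ha, Submodule.subset_span ha⟩)
    (Submodule.span_le.2 fun _ hv => hv.2)

variable {X} in
theorem RationalSub.exists_hyperplane {s : Submodule ℝ (Fin n → ℝ)} (hs : RationalSub X s)
    {A : Set (Fin n → ℝ)} (hA : A ⊆ Set.range X ∩ s) (hAs : Submodule.span ℝ A ≠ s) :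
    ∃ t, RationalSub X t ∧ Submodule.span ℝ A ≤ t ∧ t < s ∧
      Module.finrank ℝ t + 1 = Module.finrank ℝ s := by
  obtain ⟨A₀, hA₀A, hspanA₀, hA₀⟩ := exists_linearIndependent ℝ A
  obtain ⟨b, hbX, hA₀b, hXb, hb⟩ := exists_linearIndepOn_id_extension hA₀ (hA₀A.trans hA)
  have hspanb : Submodule.span ℝ b = s :=
    le_antisymm (Submodule.span_le.2 fun v hv => (hbX hv).2) (hs.le.trans (Submodule.span_le.2 hXb))
  obtain ⟨x, hxb, hxA₀⟩ : ∃ x ∈ b, x ∉ A₀ := by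
    by_contra! hbA₀
    exact hAs (le_antisymm (Submodule.span_le.2 fun v hv => (hA hv).2)
      (hspanb ▸ hspanA₀ ▸ Submodule.span_mono hbA₀))
  have hxt : x ∉ Submodule.span ℝ (b \ {x}) :=
    ((hb.mono Set.sdiff_subset).notMem_span_iff_id.2 ⟨by simpa [hxb] using hb, by simp⟩)
  have hst : Submodule.span ℝ (b \ {x}) ⊔ Submodule.span ℝ {x} = s := by
    rw [← Submodule.span_union, Set.sdiff_union_of_subset (Set.singleton_subset_iff.2 hxb), hspanb]
  refine ⟨Submodule.span ℝ (b \ {x}), rationalSub_span X fun v hv => (hbX hv.1).1, ?_, ?_, ?_⟩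
  · exact hspanA₀ ▸ Submodule.span_mono fun v hv => ⟨hA₀b hv, fun hvx => hxA₀ (hvx ▸ hv)⟩
  · exact lt_of_le_of_ne (hst ▸ le_sup_left) fun h => hxt (h ▸ hspanb ▸ Submodule.subset_span hxb)
  · rw [← hst, Submodule.finrank_sup_span_singleton hxt]

open Classical in
def dOut (W : Submodule ℝ (Fin n → ℝ)) : MvPolynomial (Fin n) ℝ :=
  ∏ i ∈ Finset.univ.filter (fun i => X i ∉ W), linP (X i)

open Classical in
def dRel (s t : Submodule ℝ (Fin n → ℝ)) : MvPolynomial (Fin n) ℝ :=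
  ∏ i ∈ Finset.univ.filter (fun i => X i ∈ s ∧ X i ∉ t), linP (X i)

def rationalSubsBelow (s : Submodule ℝ (Fin n → ℝ)) (j : ℕ) : Set (Submodule ℝ (Fin n → ℝ)) :=
  {t | RationalSub X t ∧ t < s ∧ Module.finrank ℝ t = j}

theorem Isub_eq_span_dOut (W : Submodule ℝ (Fin n → ℝ)) : Isub X W = Ideal.span {dOut X W} :=
  rfl

open Classical in
theorem dRel_mul_dOut {s t : Submodule ℝ (Fin n → ℝ)} (hts : t ≤ s) :
    dRel X s t * dOut X s = dOut X t := by
  rw [dRel, dOut, dOut, ← Finset.prod_union (Finset.disjoint_filter.2 fun _ _ h => not_not.2 h.1)]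
  congr 1
  ext i
  simp only [Finset.mem_union, Finset.mem_filter, Finset.mem_univ, true_and]
  exact ⟨fun h => h.elim And.right fun his hit => his (hts hit), fun h => by tauto⟩

open Classical in
theorem dRel_dvd_dOut (s t : Submodule ℝ (Fin n → ℝ)) : dRel X s t ∣ dOut X t :=
  Finset.prod_dvd_prod_of_subset _ _ _ fun i => by
    simp only [Finset.mem_filter, Finset.mem_univ, true_and]
    exact And.right

open Classical in
theorem dRel_dvd_dRel {s t t' : Submodule ℝ (Fin n → ℝ)}
    (h : ∀ i, X i ∈ s → X i ∈ t → X i ∈ t') : dRel X s t' ∣ dRel X s t :=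
  Finset.prod_dvd_prod_of_subset _ _ _ fun i => by
    simp only [Finset.mem_filter, Finset.mem_univ, true_and]
    exact fun hi => ⟨hi.1, fun hit => hi.2 (h i hi.1 hit)⟩

open Classical in
theorem dRel_mem_adjoin (s t : Submodule ℝ (Fin n → ℝ)) :
    dRel X s t ∈ Algebra.adjoin ℝ (linP '' (s : Set (Fin n → ℝ))) :=
  Subalgebra.prod_mem _ fun i hi =>
    Algebra.subset_adjoin ⟨X i, (Finset.mem_filter.1 hi).2.1, rfl⟩

theorem Isub_mono : Monotone (Isub X) := fun t s hts => by
  rw [Isub_eq_span_dOut, Isub_eq_span_dOut, Ideal.span_singleton_le_span_singleton]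
  exact Dvd.intro_left _ (dRel_mul_dOut X hts)

variable {X}

theorem dOut_mem_span_dRel {s : Submodule ℝ (Fin n → ℝ)} (hs : RationalSub X s) {j : ℕ}
    (hdim : Module.finrank ℝ s = j + 1) {t : Submodule ℝ (Fin n → ℝ)}
    (ht : Module.finrank ℝ t = j) :
    dOut X t ∈ Ideal.span (dRel X s '' rationalSubsBelow X s j) := by
  have hAt : Submodule.span ℝ (Set.range X ∩ s ∩ t) ≤ t := Submodule.span_le.2 fun _ hv => hv.2
  have hAs : Submodule.span ℝ (Set.range X ∩ s ∩ t) ≠ s := fun h => by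
    have := Submodule.finrank_mono (h ▸ hAt)
    omega
  obtain ⟨t', ht'X, hAt', ht's, ht'dim⟩ := hs.exists_hyperplane (fun _ hv => hv.1) hAs
  have hdvd : dRel X s t' ∣ dOut X t :=
    (dRel_dvd_dRel X fun i his hit => hAt' (Submodule.subset_span ⟨⟨⟨i, rfl⟩, his⟩, hit⟩)).trans
      (dRel_dvd_dOut X s t)
  exact Ideal.mem_of_dvd _ hdvd (Ideal.subset_span ⟨t', ⟨ht'X, ht's, by omega⟩, rfl⟩)

theorem Ilev_le_span_dRel {s : Submodule ℝ (Fin n → ℝ)} (hs : RationalSub X s) {j : ℕ}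
    (hdim : Module.finrank ℝ s = j + 1) :
    Ilev X j ≤ Ideal.span (dRel X s '' rationalSubsBelow X s j) :=
  iSup₂_le fun _ ht =>
    Ideal.span_le.2 (Set.singleton_subset_iff.2 (dOut_mem_span_dRel hs hdim ht.2))

open Classical in
theorem mem_of_dOut_mul_mem_span_dRel {s : Submodule ℝ (Fin n → ℝ)}
    {T : Set (Submodule ℝ (Fin n → ℝ))} {c : MvPolynomial (Fin n) ℝ}
    (h : dOut X s * c ∈ Ideal.span (dRel X s '' T)) : c ∈ Ideal.span (dRel X s '' T) :=
  prod_linP_mul_mem_span_cancel (Set.image_subset_iff.2 fun t _ => dRel_mem_adjoin X s t) _ _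
    (fun _ hi => (Finset.mem_filter.1 hi).2) h

theorem dOut_mul_mem_iSup_Isub {s : Submodule ℝ (Fin n → ℝ)}
    {T : Set (Submodule ℝ (Fin n → ℝ))} (hT : ∀ t ∈ T, t ≤ s) {c : MvPolynomial (Fin n) ℝ}
    (hc : c ∈ Ideal.span (dRel X s '' T)) : dOut X s * c ∈ ⨆ t ∈ T, Isub X t := by
  induction hc using Submodule.span_induction with
  | mem g hg =>
    obtain ⟨t, ht, rfl⟩ := hg
    rw [mul_comm, dRel_mul_dOut X (hT t ht)]
    exact le_iSup₂ (f := fun t _ => Isub X t) t ht (Ideal.mem_span_singleton_self _)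
  | zero => rw [mul_zero]; exact zero_mem _
  | add x y _ _ hx hy => rw [mul_add]; exact add_mem hx hy
  | smul a x _ hx => rw [smul_eq_mul, mul_left_comm]; exact Ideal.mul_mem_left _ a hx

end Arrangement

theorem stmt4_general {n m : ℕ} (X : Fin m → Fin n → ℝ)
    (s : Submodule ℝ (Fin n → ℝ)) (k : ℕ) (hk : 1 ≤ k)
    (hs : RationalSub X s) (hdim : Module.finrank ℝ s = k) :
    Isub X s ⊓ Ilev X (k - 1) =
      ⨆ t ∈ {t : Submodule ℝ (Fin n → ℝ) |
          RationalSub X t ∧ t < s ∧ Module.finrank ℝ t = k - 1},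
        Isub X t := by
  obtain ⟨j, rfl⟩ : ∃ j, k = j + 1 := ⟨k - 1, by omega⟩
  rw [Nat.add_sub_cancel]
  apply le_antisymm
  · rintro f ⟨hfs, hfj⟩
    obtain ⟨c, rfl⟩ := Ideal.mem_span_singleton.1 hfs
    have hc := mem_of_dOut_mul_mem_span_dRel (Ilev_le_span_dRel hs hdim hfj)
    exact dOut_mul_mem_iSup_Isub (fun t ht => ht.2.1.le) hc
  · exact iSup₂_le fun t ⟨ht, hts, htj⟩ =>
      le_inf (Isub_mono X hts.le) (le_iSup₂ (f := fun W _ => Isub X W) t ⟨ht, htj⟩)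

theorem stmt4 {n m : ℕ} (X : Fin m → Fin n → ℝ)
    (hX0 : ∀ i, X i ≠ 0)
    (hspan : Submodule.span ℝ (Set.range X) = ⊤)
    (s : Submodule ℝ (Fin n → ℝ)) (k : ℕ) (hk : 1 ≤ k)
    (hs : RationalSub X s) (hdim : Module.finrank ℝ s = k) :
    Isub X s ⊓ Ilev X (k - 1) =
      ⨆ t ∈ {t : Submodule ℝ (Fin n → ℝ) |
          RationalSub X t ∧ t < s ∧ Module.finrank ℝ t = k - 1},
        Isub X t :=
  stmt4_general X s k hk hs hdim
end
end

section
/- D(X) is the graded dual vector space of the finite-dimensional graded algebra D*(X) = S[g*]/I_X, under the pairing ⟨p, f⟩ = (p(∂)f)(0) for p ∈ S[g*] and f ∈ D(X); i.e. the pairing S[g*] × D(X) → ℝ descends to a perfect pairing (S[g*]/I_X) × D(X) → ℝ. -/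
/-!
STATEMENT 9: D(X) is the graded dual of the finite-dimensional algebra
D*(X) = S[g*]/I_X under the pairing ⟨p, f⟩ = (p(∂) f)(0): the pairing
S[g*] × D(X) → ℝ descends to a perfect pairing (S[g*]/I_X) × D(X) → ℝ.
-/

noncomputable section

open scoped BigOperators

def dP {n m : ℕ} (X : Fin m → Fin n → ℝ) (S : Finset (Fin m)) :
    MvPolynomial (Fin n) ℝ :=
  ∏ i ∈ S, linP (X i)

def pdirD {n : ℕ} (a : Fin n → ℝ) : Module.End ℝ (MvPolynomial (Fin n) ℝ) :=
  ∑ i, a i • (MvPolynomial.pderiv i).toLinearMap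

def piterD {n m : ℕ} (X : Fin m → Fin n → ℝ) (S : Finset (Fin m)) :
    Module.End ℝ (MvPolynomial (Fin n) ℝ) :=
  (S.toList.map fun i => pdirD (X i)).prod

open Classical in
def IsCocircuit {n m : ℕ} (X : Fin m → Fin n → ℝ) (S : Finset (Fin m)) : Prop :=
  ∃ H : Submodule ℝ (Fin n → ℝ), RationalSub X H ∧
    Module.finrank ℝ H + 1 = n ∧ S = Finset.univ.filter (fun i => X i ∉ H)

/-- The space D(X) of polynomial solutions of the cocircuit equations. -/
def Dspace {n m : ℕ} (X : Fin m → Fin n → ℝ) :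
    Submodule ℝ (MvPolynomial (Fin n) ℝ) :=
  ⨅ S ∈ {S : Finset (Fin m) | IsCocircuit X S}, LinearMap.ker (piterD X S)

/-- The cocircuit ideal I_X. -/
def IX {n m : ℕ} (X : Fin m → Fin n → ℝ) : Ideal (MvPolynomial (Fin n) ℝ) :=
  Ideal.span {p | ∃ S : Finset (Fin m), IsCocircuit X S ∧ p = dP X S}

/-- The constant-coefficient differential operator p(∂) attached to a
polynomial p: each monomial x^d is sent to ∏ᵢ ∂ᵢ^{dᵢ}. -/
def polyOp {n : ℕ} (p : MvPolynomial (Fin n) ℝ) :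
    Module.End ℝ (MvPolynomial (Fin n) ℝ) :=
  (AddMonoidAlgebra.coeff p).sum fun d c => c •
    (List.ofFn fun i : Fin n =>
      ((MvPolynomial.pderiv i).toLinearMap :
        Module.End ℝ (MvPolynomial (Fin n) ℝ)) ^ (d i)).prod

/-- The pairing ⟨p, f⟩ = (p(∂) f)(0). -/
def pairing {n : ℕ} (p f : MvPolynomial (Fin n) ℝ) : ℝ :=
  MvPolynomial.eval (0 : Fin n → ℝ) (polyOp p f)

/-!
The partial derivatives commute, so `p ↦ p(∂)` is the algebra map sending `Xᵢ` to `∂ᵢ`, and in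
monomial coordinates `⟨p, f⟩ = ∑_d d! p_d f_d` with `d! = ∏ᵢ dᵢ!`. This is the Fischer inner
product: symmetric, positive definite, with distinct degrees orthogonal and `⟨pq, f⟩ = ⟨p, q(∂) f⟩`.
The last identity shows that `D(X)` is exactly the orthogonal of `I_X`. Since `I_X` is generated
by the homogeneous products `d_Y`, taking orthogonals commutes with passing to the
finite-dimensional homogeneous components, where a subspace is its own double orthogonal; hence
`I_X` is the orthogonal of `D(X)`.
-/

section

open MvPolynomial
open scoped IsMulCommutative

variable {n : ℕ}

lemma pderiv_pderiv_comm (i j : Fin n) (f : MvPolynomial (Fin n) ℝ) :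
    pderiv i (pderiv j f) = pderiv j (pderiv i f) := by
  have : ⁅pderiv i, pderiv j⁆ = (0 : Derivation ℝ (MvPolynomial (Fin n) ℝ) _) :=
    derivation_ext fun k => by
      classical
      rw [Derivation.commutator_apply, pderiv_X, pderiv_X, Pi.single_apply, Pi.single_apply]
      split_ifs <;> simp
  have h := congr($this f)
  rwa [Derivation.commutator_apply, Derivation.zero_apply, sub_eq_zero] at h

abbrev pderivAlgebra (n : ℕ) : Subalgebra ℝ (Module.End ℝ (MvPolynomial (Fin n) ℝ)) :=
  Algebra.adjoin ℝ (Set.range fun i => (pderiv i).toLinearMap)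

instance : IsMulCommutative (pderivAlgebra n) :=
  Algebra.isMulCommutative_adjoin ℝ <| by
    rintro _ ⟨i, rfl⟩ _ ⟨j, rfl⟩
    exact LinearMap.ext fun f => pderiv_pderiv_comm i j f

def polyOpHom : MvPolynomial (Fin n) ℝ →ₐ[ℝ] Module.End ℝ (MvPolynomial (Fin n) ℝ) :=
  (pderivAlgebra n).val.comp
    (aeval fun i => ⟨(pderiv i).toLinearMap, Algebra.subset_adjoin ⟨i, rfl⟩⟩)

lemma polyOpHom_X (i : Fin n) : polyOpHom (X i) = (pderiv i).toLinearMap := by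
  simp [polyOpHom]

lemma polyOp_eq_polyOpHom (p : MvPolynomial (Fin n) ℝ) : polyOp p = polyOpHom p := by
  rw [polyOpHom, AlgHom.comp_apply, aeval_def, eval₂_eq', map_sum, polyOp, MvPolynomial.sum_def]
  refine Finset.sum_congr rfl fun d _ => ?_
  rw [map_mul, Subalgebra.coe_val, Subalgebra.coe_algebraMap, ← Algebra.smul_def, ← Fin.prod_ofFn,
    SubmonoidClass.coe_list_prod, List.map_ofFn]
  rfl

lemma pairing_eq_eval_polyOpHom (p f : MvPolynomial (Fin n) ℝ) :
    pairing p f = eval 0 (polyOpHom p f) := by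
  rw [pairing, polyOp_eq_polyOpHom]

def pairingForm : LinearMap.BilinForm ℝ (MvPolynomial (Fin n) ℝ) :=
  (polyOpHom.toLinearMap : MvPolynomial (Fin n) ℝ →ₗ[ℝ] Module.End ℝ _).compr₂
    (aeval (0 : Fin n → ℝ)).toLinearMap

@[simp]
lemma pairingForm_apply (p f : MvPolynomial (Fin n) ℝ) : pairingForm p f = pairing p f := by
  rw [pairing_eq_eval_polyOpHom, ← coe_aeval_eq_eval]
  rfl

lemma pairing_mul (p q f : MvPolynomial (Fin n) ℝ) :
    pairing (p * q) f = pairing p (polyOpHom q f) := by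
  rw [pairing_eq_eval_polyOpHom, pairing_eq_eval_polyOpHom, map_mul, Module.End.mul_apply]

lemma polyOpHom_linP (a : Fin n → ℝ) : polyOpHom (linP a) = pdirD a := by
  simp [linP, pdirD, polyOpHom_X, Algebra.smul_def]

lemma polyOpHom_dP {m : ℕ} (X : Fin m → Fin n → ℝ) (T : Finset (Fin m)) :
    polyOpHom (dP X T) = piterD X T := by
  rw [dP, ← Finset.prod_map_toList, map_list_prod, List.map_map, piterD]
  simp only [Function.comp_def, polyOpHom_linP]

lemma coeff_pderiv_iterate (i : Fin n) (k : ℕ) (e : Fin n →₀ ℕ) (f : MvPolynomial (Fin n) ℝ) :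
    coeff e ((pderiv i)^[k] f) =
      (e i + k).descFactorial k * coeff (e + Finsupp.single i k) f := by
  induction k generalizing f with
  | zero => simp
  | succ k ih =>
    rw [Function.iterate_succ_apply, ih, coeff_pderiv, add_assoc, ← Finsupp.single_add,
      ← add_assoc (e i), Nat.succ_descFactorial_succ]
    simp only [Finsupp.add_apply, Finsupp.single_eq_same]
    push_cast
    ring

lemma descFactorial_add_add (x u v : ℕ) :
    (x + (u + v)).descFactorial (u + v) =
      (x + u).descFactorial u * (x + u + v).descFactorial v := by
  rw [← Nat.descFactorial_mul_descFactorial (Nat.le_add_left v u), ← add_assoc,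
    Nat.add_sub_cancel, Nat.add_sub_cancel, mul_comm]

lemma coeff_polyOpHom_monomial (d e : Fin n →₀ ℕ) (f : MvPolynomial (Fin n) ℝ) :
    coeff e (polyOpHom (monomial d 1) f) =
      (∏ i, (e i + d i).descFactorial (d i) : ℕ) * coeff (e + d) f := by
  induction d using Finsupp.induction generalizing e with
  | zero => simp
  | single_add a k d _ _ ih =>
    have hsplit :
        ∏ i, (e i + (Finsupp.single a k + d) i).descFactorial ((Finsupp.single a k + d) i) =
          (e a + k).descFactorial k *
            ∏ i, ((e + Finsupp.single a k) i + d i).descFactorial (d i) := by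
      simp only [Finsupp.add_apply, descFactorial_add_add, Finset.prod_mul_distrib]
      congr 1
      rw [Fintype.prod_eq_single a fun i hi => by simp [Finsupp.single_eq_of_ne hi]]
      simp
    rw [monomial_single_add, map_mul, map_pow, polyOpHom_X, Module.End.mul_apply,
      Module.End.pow_apply, Derivation.coeFn_coe, coeff_pderiv_iterate, ih, hsplit, add_assoc]
    push_cast
    ring

open Nat in
def multiFactorial (d : Fin n →₀ ℕ) : ℕ := ∏ i, (d i)!

lemma multiFactorial_pos (d : Fin n →₀ ℕ) : 0 < multiFactorial d :=
  Finset.prod_pos fun i _ => Nat.factorial_pos (d i)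

lemma pairing_monomial_one (d : Fin n →₀ ℕ) (f : MvPolynomial (Fin n) ℝ) :
    pairing (monomial d 1) f = multiFactorial d * coeff d f := by
  rw [pairing_eq_eval_polyOpHom, eval_zero, constantCoeff_eq, coeff_polyOpHom_monomial, zero_add]
  simp only [Finsupp.coe_zero, Pi.zero_apply, zero_add, Nat.descFactorial_self, multiFactorial]

lemma pairing_eq_sum {A : Finset (Fin n →₀ ℕ)} {p : MvPolynomial (Fin n) ℝ} (hA : p.support ⊆ A)
    (f : MvPolynomial (Fin n) ℝ) :
    pairing p f = ∑ d ∈ A, coeff d p * (multiFactorial d * coeff d f) := by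
  have hp : p = ∑ d ∈ A, coeff d p • monomial d 1 := by
    conv_lhs => rw [p.as_sum]
    refine Finset.sum_subset hA (fun d _ hd => ?_) |>.trans (Finset.sum_congr rfl fun d _ => ?_)
    · rw [notMem_support_iff.1 hd, monomial_zero]
    · rw [smul_monomial, smul_eq_mul, mul_one]
  rw [← pairingForm_apply]
  nth_rw 1 [hp]
  rw [map_sum, LinearMap.sum_apply]
  simp only [map_smul, LinearMap.smul_apply, pairingForm_apply, pairing_monomial_one, smul_eq_mul]

lemma pairing_comm (p f : MvPolynomial (Fin n) ℝ) : pairing p f = pairing f p := by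
  classical
  rw [pairing_eq_sum Finset.subset_union_left, pairing_eq_sum Finset.subset_union_right]
  exact Finset.sum_congr rfl fun d _ => by ring

lemma pairing_self_eq_zero_iff {g : MvPolynomial (Fin n) ℝ} : pairing g g = 0 ↔ g = 0 := by
  refine ⟨fun h => ?_, fun h => by simp [← pairingForm_apply, h]⟩
  rw [pairing_eq_sum subset_rfl, Finset.sum_eq_zero_iff_of_nonneg fun d _ => by
    rw [mul_left_comm, ← sq]; positivity] at h
  refine support_eq_empty.1 (Finset.eq_empty_of_forall_notMem fun d hd => ?_)
  exact mem_support_iff.1 hd (by simpa [(multiFactorial_pos d).ne'] using h d hd)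

lemma pairing_homogeneousComponent {k : ℕ} {f : MvPolynomial (Fin n) ℝ}
    (hf : f ∈ homogeneousSubmodule (Fin n) ℝ k) (p : MvPolynomial (Fin n) ℝ) :
    pairing (homogeneousComponent k p) f = pairing p f := by
  have hsupp : (homogeneousComponent k p).support ⊆ p.support := fun d hd => by
    rw [mem_support_iff, coeff_homogeneousComponent] at hd
    exact mem_support_iff.2 fun h => hd (by simp [h])
  rw [pairing_eq_sum hsupp, pairing_eq_sum subset_rfl]
  refine Finset.sum_congr rfl fun d _ => ?_
  rw [coeff_homogeneousComponent]
  split_ifs with hd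
  · rfl
  · rw [((mem_homogeneousSubmodule k f).1 hf).coeff_eq_zero hd, mul_zero, mul_zero, mul_zero]

lemma mem_pairingForm_orthogonal_span_iff {G : Set (MvPolynomial (Fin n) ℝ)} {f : MvPolynomial (Fin n) ℝ} :
    f ∈ pairingForm.orthogonal ((Ideal.span G).restrictScalars ℝ) ↔
      ∀ g ∈ G, polyOpHom g f = 0 := by
  refine ⟨fun hf g hg => MvPolynomial.ext _ _ fun e => ?_, fun hG q hq => ?_⟩
  · have h := hf (monomial e 1 * g) (Ideal.mul_mem_left _ _ (Ideal.subset_span hg))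
    rw [pairingForm_apply, pairing_mul, pairing_monomial_one] at h
    simpa [(multiFactorial_pos e).ne'] using h
  · suffices polyOpHom q f = 0 by
      rw [pairingForm_apply, pairing_eq_eval_polyOpHom, this, map_zero]
    induction hq using Submodule.span_induction with
    | mem g hg => exact hG g hg
    | zero => simp
    | add q r _ _ hq hr => rw [map_add, LinearMap.add_apply, hq, hr, add_zero]
    | smul r q _ hq => rw [smul_eq_mul, map_mul, Module.End.mul_apply, hq, map_zero]

lemma Dspace_eq_orthogonal {m : ℕ} (X : Fin m → Fin n → ℝ) :
    Dspace X = pairingForm.orthogonal ((IX X).restrictScalars ℝ) := by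
  ext f
  rw [IX, mem_pairingForm_orthogonal_span_iff]
  simp only [Dspace, Submodule.mem_iInf, LinearMap.mem_ker, Set.mem_ofPred_eq]
  exact ⟨fun h _ ⟨T, hT, hg⟩ => hg ▸ polyOpHom_dP X T ▸ h T hT,
    fun h T hT => polyOpHom_dP X T ▸ h _ ⟨T, hT, rfl⟩⟩

instance (k : ℕ) : FiniteDimensional ℝ (homogeneousSubmodule (Fin n) ℝ k) :=
  Module.Finite.iff_fg.2 (homogeneousSubmodule_fg _ _ k)

lemma nondegenerate_restrict_pairingForm (W : Submodule ℝ (MvPolynomial (Fin n) ℝ)) :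
    (pairingForm.restrict W).Nondegenerate :=
  ⟨fun x hx => Subtype.ext (pairing_self_eq_zero_iff.1 (by simpa using hx x)),
   fun x hx => Subtype.ext (pairing_self_eq_zero_iff.1 (by simpa using hx x))⟩

lemma isRefl_restrict_pairingForm (W : Submodule ℝ (MvPolynomial (Fin n) ℝ)) :
    (pairingForm.restrict W).IsRefl := fun x y h => by
  simpa [pairing_comm] using h

section Homogeneous

attribute [local instance] gradedAlgebra

lemma isHomogeneous_IX {m : ℕ} (X : Fin m → Fin n → ℝ) :
    (IX X).IsHomogeneous (homogeneousSubmodule (Fin n) ℝ) := by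
  refine Ideal.homogeneous_span _ _ ?_
  rintro _ ⟨T, -, rfl⟩
  refine ⟨T.card, (mem_homogeneousSubmodule _ _).2 ?_⟩
  simpa [dP] using IsHomogeneous.prod T (fun i => linP (X i)) (fun _ => 1) fun i _ =>
    IsHomogeneous.sum _ _ _ fun j _ => isHomogeneous_C_mul_X (X i j) j

variable {I : Ideal (MvPolynomial (Fin n) ℝ)}
  (hI : I.IsHomogeneous (homogeneousSubmodule (Fin n) ℝ))
include hI

lemma orthogonal_restrict_homogeneousSubmodule (k : ℕ) :
    (pairingForm.restrict (homogeneousSubmodule (Fin n) ℝ k)).orthogonal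
        ((I.restrictScalars ℝ).comap (homogeneousSubmodule (Fin n) ℝ k).subtype) =
      (pairingForm.orthogonal (I.restrictScalars ℝ)).comap
        (homogeneousSubmodule (Fin n) ℝ k).subtype := by
  ext ⟨f, hf⟩
  refine ⟨fun h q hq => ?_, fun h y hy => h y hy⟩
  have hqk := h ⟨_, homogeneousComponent_mem k q⟩ (homogeneousComponent_mem_of_mem hI hq k)
  simpa [pairing_homogeneousComponent hf] using hqk

theorem orthogonal_orthogonal_of_isHomogeneous :
    pairingForm.orthogonal (pairingForm.orthogonal (I.restrictScalars ℝ)) =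
      I.restrictScalars ℝ := by
  refine le_antisymm (fun p hp => ?_)
    (LinearMap.BilinForm.le_orthogonal_orthogonal fun x y h => ?_)
  · refine (mem_iff_homogeneousComponent_mem hI p).2 fun k => ?_
    set W := homogeneousSubmodule (Fin n) ℝ k
    have hpk : (⟨_, homogeneousComponent_mem k p⟩ : W) ∈ (pairingForm.restrict W).orthogonal
        ((pairingForm.restrict W).orthogonal ((I.restrictScalars ℝ).comap W.subtype)) := by
      intro y hy
      rw [orthogonal_restrict_homogeneousSubmodule hI] at hy
      have hyp : pairing (y : MvPolynomial (Fin n) ℝ) p = 0 := by simpa using hp y hy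
      simpa [pairing_comm _ (homogeneousComponent k p), pairing_homogeneousComponent y.2,
        pairing_comm p] using hyp
    rwa [LinearMap.BilinForm.orthogonal_orthogonal (nondegenerate_restrict_pairingForm W)
      (isRefl_restrict_pairingForm W)] at hpk
  · simpa [pairing_comm] using h

end Homogeneous

end

theorem stmt9_general {n m : ℕ} (X : Fin m → Fin n → ℝ) :
    -- the pairing descends: I_X pairs to zero with D(X)
    (∀ p ∈ IX X, ∀ f ∈ Dspace X, pairing p f = 0) ∧
    -- nondegeneracy on the left, modulo I_X
    (∀ p : MvPolynomial (Fin n) ℝ,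
      (∀ f ∈ Dspace X, pairing p f = 0) → p ∈ IX X) ∧
    -- nondegeneracy on the right
    (∀ f ∈ Dspace X, (∀ p : MvPolynomial (Fin n) ℝ, pairing p f = 0) → f = 0) := by
  simp only [Dspace_eq_orthogonal]
  refine ⟨fun p hp f hf => by simpa using hf p hp, fun p hp => ?_,
    fun f _ hf => pairing_self_eq_zero_iff.1 (hf f)⟩
  rw [← Submodule.restrictScalars_mem ℝ,
    ← orthogonal_orthogonal_of_isHomogeneous (isHomogeneous_IX X)]
  exact fun f hf => by simpa [pairing_comm] using hp f hf

theorem stmt9 {n m : ℕ} (X : Fin m → Fin n → ℝ)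
    (hX0 : ∀ i, X i ≠ 0)
    (hspan : Submodule.span ℝ (Set.range X) = ⊤) :
    -- the pairing descends: I_X pairs to zero with D(X)
    (∀ p ∈ IX X, ∀ f ∈ Dspace X, pairing p f = 0) ∧
    -- nondegeneracy on the left, modulo I_X
    (∀ p : MvPolynomial (Fin n) ℝ,
      (∀ f ∈ Dspace X, pairing p f = 0) → p ∈ IX X) ∧
    -- nondegeneracy on the right
    (∀ f ∈ Dspace X, (∀ p : MvPolynomial (Fin n) ℝ, pairing p f = 0) → f = 0) :=
  stmt9_general X
end
end
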